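/- Let (G,α) and (H,β) be totally disconnected locally compact groups with contractive automorphisms α and β respectively, and φ : G → H a continuous homomorphism satisfying β∘φ = φ∘α. Then φ(G) is closed in H and β-stable, and the corestriction φ : G → φ(G) is an open (quotient) map. In particular, if φ is injective then φ is a topological isomorphism onto its image. -/

import Mathlib

open Filter Topology
open scoped Pointwise

section ContractionAux

variable {G : Type*} [Group G] [TopologicalSpace G] [IsTopologicalGroup G]

set_option linter.unusedSectionVars false

lemma contrContPow (α : MulAut G) (hc : Continuous α) (n : ℕ) : Continuous ⇑(α ^ n) := by
  induction n with
  | zero => simpa using continuous_id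
  | succ n ih =>
    have : ⇑(α ^ (n+1)) = ⇑(α ^ n) ∘ ⇑α := by
      funext x; simp [pow_succ, MulAut.mul_apply]
    rw [this]; exact ih.comp hc

lemma pow_apply_add (α : MulAut G) (m n : ℕ) (x : G) :
    (α ^ (m + n)) x = (α ^ m) ((α ^ n) x) := by
  rw [pow_add, MulAut.mul_apply]

/-- van Dantzig: small compact open subgroups. -/
lemma exists_compact_open_subgroup [LocallyCompactSpace G] [T2Space G]
    [TotallyDisconnectedSpace G] {W : Set G} (hW : W ∈ 𝓝 1) :
    ∃ V : Subgroup G, IsOpen (V : Set G) ∧ IsCompact (V : Set G) ∧ (V : Set G) ⊆ W := by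
  obtain ⟨s, hs, hs1⟩ := exists_compact_mem_nhds (1 : G)
  have h1 : (1 : G) ∈ interior s ∩ interior W :=
    ⟨mem_interior_iff_mem_nhds.2 hs1, mem_interior_iff_mem_nhds.2 hW⟩
  obtain ⟨K, hKclopen, hK1, hKsub⟩ :=
    (loc_compact_Haus_tot_disc_of_zero_dim (H := G)).mem_nhds_iff.1
      ((isOpen_interior.inter isOpen_interior).mem_nhds h1)
  have hKW : K ⊆ W := fun x hx => interior_subset (hKsub hx).2
  have hKcomp : IsCompact K := hs.of_isClosed_subset hKclopen.1
    (fun x hx => interior_subset (hKsub hx).1)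
  obtain ⟨V, hV1, hKV⟩ := compact_open_separated_mul_right hKcomp hKclopen.2 (fun x hx => hx)
  set V' : Set G := V ∩ V⁻¹ with hV'def
  have hV'1 : V' ∈ 𝓝 1 := by
    exact Filter.inter_mem hV1 (inv_mem_nhds_one G hV1)
  have hV'symm : ∀ x ∈ V', x⁻¹ ∈ V' := by
    rintro x ⟨h1, h2⟩; exact ⟨Set.mem_inv.1 h2, by simpa using h1⟩
  -- the subgroup generated by V'
  set U : Subgroup G := Subgroup.closure V' with hUdef
  have key : ∀ x ∈ U, (fun y => y * x) '' K = K := by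
    intro x hx
    refine Subgroup.closure_induction (k := V') ?_ ?_ ?_ ?_ hx
    · intro v hv
      apply Set.Subset.antisymm
      · rintro _ ⟨k, hk, rfl⟩
        exact hKV (Set.mul_mem_mul hk hv.1)
      · intro k hk
        refine ⟨k * v⁻¹, ?_, by simp⟩
        exact hKV (Set.mul_mem_mul hk (hV'symm v hv).1)
    · simp
    · intro x y _ _ px py
      have : (fun z => z * (x * y)) = (fun z => z * y) ∘ (fun z => z * x) := by
        funext z; simp [mul_assoc]
      rw [this, Set.image_comp, px, py]
    · intro x _ px
      have : (fun z => z * x⁻¹) '' ((fun z => z * x) '' K) = K := by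
        rw [← Set.image_comp]
        simpa using Set.image_id K
      rw [px] at this; exact this
  have hUK : (U : Set G) ⊆ K := by
    intro x hx
    have := key x hx
    rw [← this]
    exact ⟨1, hK1, by simp⟩
  have hUopen : IsOpen (U : Set G) :=
    Subgroup.isOpen_of_mem_nhds U (Filter.mem_of_superset hV'1 Subgroup.subset_closure)
  exact ⟨U, hUopen, hKcomp.of_isClosed_subset (U.isClosed_of_isOpen hUopen) hUK,
    fun x hx => hKW (hUK hx)⟩


variable [LocallyCompactSpace G] [T2Space G]

/-- Uniform contraction on compact sets, into an open subgroup. -/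
lemma contr_uniform (α : MulAut G) (hc : Continuous α)
    (hcontr : ∀ x : G, Tendsto (fun n : ℕ => (α ^ n) x) atTop (𝓝 1))
    (V : Subgroup G) (hVo : IsOpen (V : Set G)) {K : Set G} (hK : IsCompact K) :
    ∃ N : ℕ, ∀ n ≥ N, ∀ x ∈ K, (α ^ n) x ∈ V := by
  have hVcl : IsClosed (V : Set G) := V.isClosed_of_isOpen hVo
  set W : ℕ → Set G := fun n => ⋂ (m : ℕ) (_ : n ≤ m), (⇑(α ^ m)) ⁻¹' (V : Set G) with hWdef
  have hWclosed : ∀ n, IsClosed (W n) := fun n =>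
    isClosed_iInter fun m => isClosed_iInter fun _ => hVcl.preimage (contrContPow α hc m)
  have hWcover : (⋃ n, W n) = Set.univ := by
    refine Set.eq_univ_of_forall fun x => ?_
    have : ∀ᶠ n in atTop, (α ^ n) x ∈ (V : Set G) :=
      (hcontr x).eventually (hVo.mem_nhds V.one_mem)
    obtain ⟨n0, hn0⟩ := eventually_atTop.1 this
    exact Set.mem_iUnion.2 ⟨n0, Set.mem_iInter.2 fun m => Set.mem_iInter.2 fun hm => hn0 m hm⟩
  obtain ⟨n0, x0, hx0⟩ : ∃ n0 x0, x0 ∈ interior (W n0) := by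
    obtain ⟨n0, hn0⟩ := nonempty_interior_of_iUnion_of_closed hWclosed hWcover
    exact ⟨n0, hn0.some, hn0.some_mem⟩
  -- P: open neighborhood of 1 whose iterates from n0 on lie in V
  set P : Set G := (fun y => x0 * y) ⁻¹' interior (W n0) with hPdef
  have hPopen : IsOpen P := isOpen_interior.preimage (continuous_mul_left x0)
  have hP1 : (1 : G) ∈ P := by simpa [P] using hx0
  have hPprop : ∀ y ∈ P, ∀ m, n0 ≤ m → (α ^ m) y ∈ (V : Set G) := by
    intro y hy m hm
    have hx0W : x0 ∈ W n0 := interior_subset hx0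
    have hxyW : x0 * y ∈ W n0 := interior_subset hy
    have h1 : (α ^ m) x0 ∈ (V : Set G) := by
      have := Set.mem_iInter.1 hx0W m; exact Set.mem_iInter.1 this hm
    have h2 : (α ^ m) (x0 * y) ∈ (V : Set G) := by
      have := Set.mem_iInter.1 hxyW m; exact Set.mem_iInter.1 this hm
    have : (α ^ m) y = ((α ^ m) x0)⁻¹ * (α ^ m) (x0 * y) := by
      rw [map_mul]; group
    rw [this]
    exact V.mul_mem (V.inv_mem h1) h2
  -- cover K
  have hchoice : ∀ x : G, ∃ n : ℕ, (α ^ n) x ∈ P := by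
    intro x
    exact ((hcontr x).eventually (hPopen.mem_nhds hP1)).exists
  choose nx hnx using hchoice
  have hcover : ∀ x ∈ K, (⇑(α ^ (nx x))) ⁻¹' P ∈ 𝓝 x := fun x _ =>
    ((hPopen.preimage (contrContPow α hc (nx x))).mem_nhds (hnx x))
  obtain ⟨t, _, ht⟩ := hK.elim_nhds_subcover (fun x => (⇑(α ^ (nx x))) ⁻¹' P) hcover
  refine ⟨(t.sup nx) + n0, fun n hn x hx => ?_⟩
  obtain ⟨x0', hx0't, hx0'⟩ := Set.mem_iUnion₂.1 (ht hx)
  have hsup : nx x0' ≤ t.sup nx := Finset.le_sup hx0't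
  have hle : nx x0' ≤ n := by omega
  obtain ⟨k, hk⟩ : ∃ k, n = k + nx x0' := ⟨n - nx x0', by omega⟩
  have hge : n0 ≤ k := by omega
  subst hk
  rw [pow_add, MulAut.mul_apply]
  exact hPprop _ hx0' _ hge


variable [TotallyDisconnectedSpace G]

lemma exists_invariant_compact_open (α : MulAut G) (hc : Continuous α)
    (hcontr : ∀ x : G, Tendsto (fun n : ℕ => (α ^ n) x) atTop (𝓝 1)) :
    ∃ U : Subgroup G, IsOpen (U : Set G) ∧ IsCompact (U : Set G) ∧ ∀ x ∈ U, α x ∈ U := by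
  obtain ⟨V, hVo, hVc, -⟩ := exists_compact_open_subgroup (G := G) Filter.univ_mem
  obtain ⟨N, hN⟩ := contr_uniform α hc hcontr V hVo hVc
  set U : Subgroup G := ⨅ i : Fin (N + 1), V.comap (α ^ (i : ℕ)).toMonoidHom with hUdef
  have hmem : ∀ x : G, x ∈ U ↔ ∀ i : Fin (N + 1), (α ^ (i : ℕ)) x ∈ V := by
    intro x
    simp [hUdef, Subgroup.mem_iInf, Subgroup.mem_comap]
  have hcoe : (U : Set G) = ⋂ i : Fin (N + 1), (⇑(α ^ (i : ℕ))) ⁻¹' (V : Set G) := by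
    ext x
    simp only [SetLike.mem_coe, hmem, Set.mem_iInter, Set.mem_preimage]
  have hUo : IsOpen (U : Set G) := by
    rw [hcoe]
    exact isOpen_iInter_of_finite fun i => hVo.preimage (contrContPow α hc _)
  have hUV : (U : Set G) ⊆ V := by
    intro x hx
    have := (hmem x).1 hx ⟨0, Nat.succ_pos N⟩
    simpa using this
  refine ⟨U, hUo, hVc.of_isClosed_subset (U.isClosed_of_isOpen hUo) hUV, ?_⟩
  intro x hx
  rw [hmem]
  intro i
  have hxi : ∀ j : ℕ, j ≤ N → (α ^ j) x ∈ V := fun j hj => (hmem x).1 hx ⟨j, by omega⟩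
  have hstep : (α ^ (i : ℕ)) (α x) = (α ^ ((i : ℕ) + 1)) x := by
    rw [pow_add, MulAut.mul_apply, pow_one]
  rw [hstep]
  rcases Nat.lt_or_ge (i : ℕ) N with hlt | hge
  · exact hxi _ (by omega)
  · have hiN : (i : ℕ) = N := by omega
    exact hN ((i : ℕ) + 1) (by omega) x (hUV hx)


variable {H : Type*} [Group H] [TopologicalSpace H] [IsTopologicalGroup H]
  [LocallyCompactSpace H] [T2Space H] [TotallyDisconnectedSpace H]

lemma symm_pow {G : Type*} [Group G] (α : MulAut G) (n : ℕ) :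
    (α ^ n).symm = α.symm ^ n := by
  rw [← MulAut.inv_def, ← MulAut.inv_def, inv_pow]

lemma range_closed (α : MulAut G) (hcα : Continuous α) (hcα' : Continuous α.symm)
    (hcontrα : ∀ x : G, Tendsto (fun n : ℕ => (α ^ n) x) atTop (𝓝 1))
    (β : MulAut H) (hcβ : Continuous β) (hcβ' : Continuous β.symm)
    (hcontrβ : ∀ y : H, Tendsto (fun n : ℕ => (β ^ n) y) atTop (𝓝 1))
    (φ : G →* H) (hφ : Continuous φ) (hint : ∀ g : G, β (φ g) = φ (α g)) :
    IsClosed (Set.range ⇑φ) := by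
  classical
  -- intertwining for powers
  have hpow : ∀ (n : ℕ) (g : G), (β ^ n) (φ g) = φ ((α ^ n) g) := by
    intro n
    induction n with
    | zero => intro g; simp
    | succ n ih =>
      intro g
      have h1 : (β ^ (n + 1)) (φ g) = (β ^ n) (β (φ g)) := by
        rw [pow_succ, MulAut.mul_apply]
      rw [h1, hint g, ih (α g), ← MulAut.mul_apply, ← pow_succ]
  -- invariant compact open subgroup of G
  obtain ⟨U, hUo, hUc, hUinv⟩ := exists_invariant_compact_open α hcα hcontrα
  -- the "annulus" E = U \ (α(U) * ker φ)
  have hαUopen : IsOpen (⇑α '' (U : Set G)) := by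
    have : ⇑α '' (U : Set G) = (⇑α.symm) ⁻¹' (U : Set G) := by
      ext x
      constructor
      · rintro ⟨u, hu, rfl⟩; simpa using hu
      · intro hx; exact ⟨α.symm x, hx, by simp⟩
    rw [this]; exact hUo.preimage hcα'
  set E : Set G := (U : Set G) \ ((⇑α '' (U : Set G)) * (φ.ker : Set G)) with hEdef
  have hEc : IsCompact E := hUc.diff (hαUopen.mul_right)
  have hone : (1 : H) ∉ ⇑φ '' E := by
    rintro ⟨x, ⟨hxU, hxn⟩, hφx⟩
    refine hxn ?_
    rw [Set.mem_mul]
    exact ⟨α 1, ⟨1, U.one_mem, rfl⟩, x, hφx, by simp⟩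
  -- small compact open subgroup of H avoiding φ(E)
  have hcompl : (⇑φ '' E)ᶜ ∈ 𝓝 (1 : H) :=
    ((hEc.image hφ).isClosed.isOpen_compl).mem_nhds hone
  obtain ⟨V₁, hV₁o, hV₁c, hV₁sub⟩ := exists_compact_open_subgroup hcompl
  -- now prove closedness
  refine isClosed_of_closure_subset ?_
  intro h hh
  obtain ⟨𝒰, hL𝒰, h𝒰⟩ := mem_closure_iff_ultrafilter.1 hh
  -- compact neighborhood of h, uniform contraction bound
  obtain ⟨Ch, hChc, hCh⟩ := exists_compact_mem_nhds h
  obtain ⟨N, hN⟩ := contr_uniform β hcβ hcontrβ V₁ hV₁o hChc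
  -- the candidate compact pieces of the range
  set D : ℕ → Set H := fun M => ⇑φ '' ((⇑(α ^ M)) ⁻¹' (U : Set G)) with hDdef
  have hDc : ∀ M, IsCompact (D M) := by
    intro M
    have him : (⇑(α ^ M)) ⁻¹' (U : Set G) = ⇑(α.symm ^ M) '' (U : Set G) := by
      ext x
      constructor
      · intro hx
        exact ⟨(α ^ M) x, hx, by rw [← symm_pow]; simp⟩
      · rintro ⟨u, hu, rfl⟩
        have : (α ^ M) ((α.symm ^ M) u) = u := by rw [← symm_pow]; simp
        simpa [this] using hu
    rw [hDdef]
    simp only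
    rw [him]
    exact ((hUc.image (contrContPow α.symm hcα' M)).image hφ)
  by_cases hM : ∃ M, D M ∈ 𝒰
  · obtain ⟨M, hDM⟩ := hM
    have : h ∈ D M := (hDc M).isClosed.closure_subset (mem_closure_iff_ultrafilter.2 ⟨𝒰, hDM, h𝒰⟩)
    obtain ⟨g, -, rfl⟩ := this
    exact ⟨g, rfl⟩
  · exfalso
    push_neg at hM
    have hA : Ch ∩ (Set.range ⇑φ \ D N) ∈ 𝒰 := by
      refine Filter.inter_mem (h𝒰 hCh) (Filter.inter_mem hL𝒰 ?_)
      exact (Ultrafilter.compl_mem_iff_notMem).2 (hM N)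
    obtain ⟨y, hyCh, ⟨g, rfl⟩, hyD⟩ := 𝒰.nonempty_of_mem hA
    -- escape time of the coset g * ker φ
    set P : ℕ → Prop := fun n => ∃ k, k ∈ φ.ker ∧ (α ^ n) (g * k) ∈ U with hPdef
    have hPex : ∃ n, P n := by
      obtain ⟨n, hn⟩ := ((hcontrα g).eventually (hUo.mem_nhds U.one_mem)).exists
      exact ⟨n, 1, φ.ker.one_mem, by rw [mul_one]; exact hn⟩
    set t := Nat.find hPex with htdef
    obtain ⟨k₀, hk₀, hc0⟩ : P t := Nat.find_spec hPex
    have hPmono : ∀ m m', m ≤ m' → P m → P m' := by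
      intro m m' hmm' hm
      induction m' with
      | zero => simpa [Nat.le_zero.1 hmm'] using hm
      | succ n ih =>
        rcases Nat.lt_succ_iff_lt_or_eq.1 (Nat.lt_succ_of_le hmm') with hlt | rfl
        · obtain ⟨k, hk, hku⟩ := ih (Nat.lt_succ_iff.1 hlt)
          refine ⟨k, hk, ?_⟩
          rw [pow_succ', MulAut.mul_apply]
          exact hUinv _ hku
        · exact hm
    have hPN : ¬ P N := by
      rintro ⟨k, hk, hku⟩
      refine hyD ?_
      have : φ (g * k) = φ g := by
        have : φ k = 1 := hk
        simp [map_mul, this]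
      exact ⟨g * k, hku, this⟩
    have htN : N < t := by
      by_contra hle
      exact hPN (hPmono t N (by omega) (Nat.find_spec hPex))
    obtain ⟨s, hs⟩ : ∃ s, t = s + 1 := ⟨t - 1, by omega⟩
    have hPs : ¬ P s := Nat.find_min hPex (by omega)
    set c : G := (α ^ t) (g * k₀) with hcdef
    -- ker φ is stable under (α ^ n).symm
    have hkersymm : ∀ (n : ℕ) (x : G), x ∈ φ.ker → (α ^ n).symm x ∈ φ.ker := by
      intro n x hx
      have h1 : (β ^ n) (φ ((α ^ n).symm x)) = φ x := by
        rw [hpow]; simp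
      have h2 : φ x = 1 := hx
      have : φ ((α ^ n).symm x) = 1 := by
        apply (β ^ n).injective
        rw [h1, h2, map_one]
      exact this
    -- c lies in the annulus E
    have hcE : c ∈ E := by
      refine ⟨hc0, ?_⟩
      rw [Set.mem_mul]
      rintro ⟨-, ⟨u, hu, rfl⟩, k₁, hk₁, hck⟩
      have hα1 : ∀ z : G, (α ^ t) z = α ((α ^ s) z) := by
        intro z; rw [hs, pow_succ', MulAut.mul_apply]
      have key : (α ^ s) (g * (k₀ * (α ^ t).symm k₁⁻¹)) = u := by
        apply α.injective
        rw [← hα1]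
        have e1 : (α ^ t) (g * (k₀ * (α ^ t).symm k₁⁻¹)) = c * k₁⁻¹ := by
          rw [← mul_assoc, map_mul, ← hcdef]
          congr 1
          simp
        rw [e1, ← hck]
        simp [mul_assoc]
      exact hPs ⟨k₀ * (α ^ t).symm k₁⁻¹,
        φ.ker.mul_mem hk₀ (hkersymm t _ (φ.ker.inv_mem hk₁)), by rw [key]; exact hu⟩
    have hfinal : φ c ∈ V₁ := by
      have hyc : φ c = (β ^ t) (φ g) := by
        rw [hcdef, ← hpow, map_mul]
        have : φ k₀ = 1 := hk₀
        rw [this, mul_one]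
      rw [hyc]
      exact hN t (by omega) _ hyCh
    exact hV₁sub hfinal ⟨c, hcE, rfl⟩


end ContractionAux

/-- If `φ : G → H` is a continuous homomorphism between totally disconnected
locally compact contraction groups `(G, α)`, `(H, β)` with `β ∘ φ = φ ∘ α`,
then `φ(G)` is closed and `β`-stable, the corestriction `G → φ(G)` is open,
and if `φ` is injective then `φ` is an embedding (a topological isomorphism
onto its image). -/
theorem stmt6 (G H : Type*) [Group G] [TopologicalSpace G] [IsTopologicalGroup G]
    [LocallyCompactSpace G] [T2Space G] [TotallyDisconnectedSpace G]
    [Group H] [TopologicalSpace H] [IsTopologicalGroup H]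
    [LocallyCompactSpace H] [T2Space H] [TotallyDisconnectedSpace H]
    (α : MulAut G) (hcα : Continuous α) (hcα' : Continuous α.symm)
    (hcontrα : ∀ x : G, Tendsto (fun n : ℕ => (α ^ n) x) atTop (𝓝 1))
    (β : MulAut H) (hcβ : Continuous β) (hcβ' : Continuous β.symm)
    (hcontrβ : ∀ y : H, Tendsto (fun n : ℕ => (β ^ n) y) atTop (𝓝 1))
    (φ : G →* H) (hφ : Continuous φ) (hint : ∀ g : G, β (φ g) = φ (α g)) :
    IsClosed (Set.range ⇑φ) ∧
    ⇑β '' (Set.range ⇑φ) = Set.range ⇑φ ∧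
    IsOpenMap (fun g : G => (⟨φ g, g, rfl⟩ : Set.range ⇑φ)) ∧
    (Function.Injective ⇑φ → Topology.IsEmbedding ⇑φ) := by
  have hclosed : IsClosed (Set.range ⇑φ) :=
    range_closed α hcα hcα' hcontrα β hcβ hcβ' hcontrβ φ hφ hint
  have hstable : ⇑β '' (Set.range ⇑φ) = Set.range ⇑φ := by
    ext y
    constructor
    · rintro ⟨x, ⟨g, rfl⟩, rfl⟩
      exact ⟨α g, (hint g).symm⟩
    · rintro ⟨g, rfl⟩
      exact ⟨φ (α.symm g), ⟨α.symm g, rfl⟩, by rw [hint, MulEquiv.apply_symm_apply]⟩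
  -- σ-compactness of G
  obtain ⟨U, hUo, hUc, -⟩ := exists_compact_open_subgroup (G := G) Filter.univ_mem
  haveI hσ : SigmaCompactSpace G := by
    refine ⟨⟨fun n => ⇑(α.symm ^ n) '' (U : Set G),
      fun n => hUc.image (contrContPow α.symm hcα' n), ?_⟩⟩
    refine Set.eq_univ_of_forall fun x => ?_
    obtain ⟨n, hn⟩ := ((hcontrα x).eventually (hUo.mem_nhds U.one_mem)).exists
    refine Set.mem_iUnion.2 ⟨n, (α ^ n) x, hn, ?_⟩
    rw [← symm_pow]
    simp
  have hcr : IsClosed ((φ.range : Subgroup H) : Set H) := by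
    rw [MonoidHom.coe_range]; exact hclosed
  haveI : LocallyCompactSpace φ.range := hcr.locallyCompactSpace
  have hopen : IsOpenMap ⇑φ.rangeRestrict :=
    MonoidHom.isOpenMap_of_sigmaCompact φ.rangeRestrict φ.rangeRestrict_surjective
      (hφ.subtype_mk _)
  have hopen' : IsOpenMap (fun g : G => (⟨φ g, g, rfl⟩ : Set.range ⇑φ)) := hopen
  refine ⟨hclosed, hstable, hopen', ?_⟩
  intro hinj
  have hψc : Continuous (fun g : G => (⟨φ g, g, rfl⟩ : Set.range ⇑φ)) := hφ.subtype_mk _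
  have hψinj : Function.Injective (fun g : G => (⟨φ g, g, rfl⟩ : Set.range ⇑φ)) := by
    intro a b hab
    exact hinj (congrArg Subtype.val hab)
  have hψemb := IsOpenEmbedding.of_continuous_injective_isOpenMap hψc hψinj hopen'
  have : ⇑φ = Subtype.val ∘ (fun g : G => (⟨φ g, g, rfl⟩ : Set.range ⇑φ)) := rfl
  rw [this]
  exact Topology.IsEmbedding.subtypeVal.comp hψemb.isEmbedding
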